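/- Let g be a real Lie algebra with a hypercomplex structure (I,J,K) and Obata connection ∇. Then for every i ≥ 0 and all X, Y ∈ g_i^H, one has ∇_X Y ∈ g_{i+1}^H. -/

import Mathlib

open Submodule

section Hyper

variable {L : Type*} [LieRing L] [LieAlgebra ℝ L]

/-- A complex structure operator on a real Lie algebra: `I² = -id` and the integrability
identity `[IX,IY] = [X,Y] + I[IX,Y] + I[X,IY]` (equivalent to `g^{1,0}` being a subalgebra). -/
def IsComplexStructureOp (I : L →ₗ[ℝ] L) : Prop :=
  (∀ x, I (I x) = -x) ∧ ∀ x y : L, ⁅I x, I y⁆ = ⁅x, y⁆ + I ⁅I x, y⁆ + I ⁅x, I y⁆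

/-- A hypercomplex structure: a triple of complex structure operators with `IJ = K`
(together with `I² = J² = K² = -id` this gives the quaternionic relations). -/
structure IsHypercomplex (I J K : L →ₗ[ℝ] L) : Prop where
  hI : IsComplexStructureOp I
  hJ : IsComplexStructureOp J
  hK : IsComplexStructureOp K
  hIJ : ∀ x, I (J x) = K x

/-- The Obata connection `∇_X` as an endomorphism of `L`:
`∇_X Y = ½([X,Y] + I[IX,Y] − J[X,JY] + K[IX,JY])`. -/
noncomputable def obataOp (I J K : L →ₗ[ℝ] L) (X : L) : Module.End ℝ L :=
  (1/2 : ℝ) • (LieAlgebra.ad ℝ L X + I ∘ₗ LieAlgebra.ad ℝ L (I X)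
    - J ∘ₗ LieAlgebra.ad ℝ L X ∘ₗ J + K ∘ₗ LieAlgebra.ad ℝ L (I X) ∘ₗ J)

/-- Flatness of the Obata connection. -/
def ObataFlat (I J K : L →ₗ[ℝ] L) : Prop :=
  ∀ X Y Z : L, obataOp I J K X (obataOp I J K Y Z) - obataOp I J K Y (obataOp I J K X Z)
    = obataOp I J K ⁅X, Y⁆ Z

/-- The set of brackets of elements of a subspace `W`. -/
def bracketSet (W : Submodule ℝ L) : Set L := {z : L | ∃ x ∈ W, ∃ y ∈ W, z = ⁅x, y⁆}

/-- `H[W,W] = span([W,W] ∪ I[W,W] ∪ J[W,W] ∪ K[W,W])`. -/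
def Hbr (I J K : L →ₗ[ℝ] L) (W : Submodule ℝ L) : Submodule ℝ L :=
  span ℝ (bracketSet W ∪ I '' bracketSet W ∪ J '' bracketSet W ∪ K '' bracketSet W)

/-- The descending series `g_0^H = g`, `g_i^H = H[g_{i-1}^H, g_{i-1}^H]`. -/
def gH (I J K : L →ₗ[ℝ] L) : ℕ → Submodule ℝ L
  | 0 => ⊤
  | i + 1 => Hbr I J K (gH I J K i)

end Hyper


/-!
Each of the four terms of `∇_X Y` has the form `[u,v]`, `I[u,v]`, `J[u,v]` or `K[u,v]` with
`u ∈ {X, IX}` and `v ∈ {Y, JY}`. So it suffices that every `g_i^H` is stable under `I` and `J`,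
which holds because `I` and `J` permute the generators `[W,W] ∪ I[W,W] ∪ J[W,W] ∪ K[W,W]`
of `H[W,W]` up to sign.
-/

section ObataSeries

variable {L : Type*} [LieRing L] [LieAlgebra ℝ L] {I J K : L →ₗ[ℝ] L}

lemma gH_succ (i : ℕ) : gH I J K (i + 1) = Hbr I J K (gH I J K i) := rfl

lemma obataOp_apply (X Y : L) :
    obataOp I J K X Y = (1/2 : ℝ) • (⁅X, Y⁆ + I ⁅I X, Y⁆ - J ⁅X, J Y⁆ + K ⁅I X, J Y⁆) := by
  simp only [obataOp, LinearMap.smul_apply, LinearMap.add_apply, LinearMap.sub_apply,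
    LinearMap.comp_apply, LieAlgebra.ad_apply]

section Hbr

variable {W : Submodule ℝ L} {u v : L}

lemma bracket_mem_Hbr (hu : u ∈ W) (hv : v ∈ W) : ⁅u, v⁆ ∈ Hbr I J K W :=
  subset_span (Or.inl (Or.inl (Or.inl ⟨u, hu, v, hv, rfl⟩)))

lemma I_bracket_mem_Hbr (hu : u ∈ W) (hv : v ∈ W) : I ⁅u, v⁆ ∈ Hbr I J K W :=
  subset_span (Or.inl (Or.inl (Or.inr ⟨_, ⟨u, hu, v, hv, rfl⟩, rfl⟩)))

lemma J_bracket_mem_Hbr (hu : u ∈ W) (hv : v ∈ W) : J ⁅u, v⁆ ∈ Hbr I J K W :=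
  subset_span (Or.inl (Or.inr ⟨_, ⟨u, hu, v, hv, rfl⟩, rfl⟩))

lemma K_bracket_mem_Hbr (hu : u ∈ W) (hv : v ∈ W) : K ⁅u, v⁆ ∈ Hbr I J K W :=
  subset_span (Or.inr ⟨_, ⟨u, hu, v, hv, rfl⟩, rfl⟩)

end Hbr

namespace IsHypercomplex

variable (h : IsHypercomplex I J K)
include h

lemma I_K_apply (x : L) : I (K x) = -J x := by
  rw [← h.hIJ, h.hI.1]

lemma J_K_apply (x : L) : J (K x) = I x := by
  have hKK := congrArg I (h.hK.1 x)
  rwa [← h.hIJ (K x), h.hI.1, map_neg, neg_inj] at hKK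

lemma J_I_apply (x : L) : J (I x) = -K x := by
  calc J (I x) = -J (K (J x)) := by rw [← h.hIJ, h.hJ.1, map_neg, map_neg, neg_neg]
    _ = -K x := by rw [h.J_K_apply, h.hIJ]

lemma map_I_Hbr_le (W : Submodule ℝ L) : (Hbr I J K W).map I ≤ Hbr I J K W := by
  refine (map_span_le _ _ _).mpr ?_
  rintro _ (((⟨u, hu, v, hv, rfl⟩ | ⟨_, ⟨u, hu, v, hv, rfl⟩, rfl⟩) |
    ⟨_, ⟨u, hu, v, hv, rfl⟩, rfl⟩) | ⟨_, ⟨u, hu, v, hv, rfl⟩, rfl⟩)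
  · exact I_bracket_mem_Hbr hu hv
  · rw [h.hI.1]
    exact neg_mem (bracket_mem_Hbr hu hv)
  · rw [h.hIJ]
    exact K_bracket_mem_Hbr hu hv
  · rw [h.I_K_apply]
    exact neg_mem (J_bracket_mem_Hbr hu hv)

lemma map_J_Hbr_le (W : Submodule ℝ L) : (Hbr I J K W).map J ≤ Hbr I J K W := by
  refine (map_span_le _ _ _).mpr ?_
  rintro _ (((⟨u, hu, v, hv, rfl⟩ | ⟨_, ⟨u, hu, v, hv, rfl⟩, rfl⟩) |
    ⟨_, ⟨u, hu, v, hv, rfl⟩, rfl⟩) | ⟨_, ⟨u, hu, v, hv, rfl⟩, rfl⟩)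
  · exact J_bracket_mem_Hbr hu hv
  · rw [h.J_I_apply]
    exact neg_mem (K_bracket_mem_Hbr hu hv)
  · rw [h.hJ.1]
    exact neg_mem (bracket_mem_Hbr hu hv)
  · rw [h.J_K_apply]
    exact I_bracket_mem_Hbr hu hv

lemma I_mem_gH {x : L} : ∀ {i : ℕ}, x ∈ gH I J K i → I x ∈ gH I J K i
  | 0, _ => mem_top
  | _ + 1, hx => h.map_I_Hbr_le _ (mem_map_of_mem hx)

lemma J_mem_gH {x : L} : ∀ {i : ℕ}, x ∈ gH I J K i → J x ∈ gH I J K i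
  | 0, _ => mem_top
  | _ + 1, hx => h.map_J_Hbr_le _ (mem_map_of_mem hx)

end IsHypercomplex

end ObataSeries

/-- the Obata connection maps `g_i^H × g_i^H` into `g_{i+1}^H`. -/
theorem obata_maps_gH {L : Type*} [LieRing L] [LieAlgebra ℝ L]
    (I J K : L →ₗ[ℝ] L) (h : IsHypercomplex I J K) :
    ∀ (i : ℕ) (X Y : L), X ∈ gH I J K i → Y ∈ gH I J K i →
      obataOp I J K X Y ∈ gH I J K (i + 1) := by
  intro i X Y hX hY
  have hIX := h.I_mem_gH hX
  have hJY := h.J_mem_gH hY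
  rw [obataOp_apply, gH_succ]
  exact smul_mem _ _ <| add_mem
    (sub_mem (add_mem (bracket_mem_Hbr hX hY) (I_bracket_mem_Hbr hIX hY))
      (J_bracket_mem_Hbr hX hJY))
    (K_bracket_mem_Hbr hIX hJY)
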